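/- Let p ≥ 2 be real, A a real k × m matrix, b ∈ ℝ^k, g ∈ ℝ^m, r ∈ ℝ^m with r ≥ 0 entrywise, and s ≥ 0. Define obj₁(x) = gᵀx − h_p(r, s, x). Let x₀ satisfy Ax₀ = b, and define the residual data g' = 2^p(g − ∇_x h_p(r, s, x)|_{x = x₀}) and r' = r + s|x₀|^{p-2}, with residual objective obj₂(δ) = (g')ᵀδ − h_p(r', s, δ). Then for every x̃ with Ax̃ = b, the vector δ̃ = x̃ − x₀ satisfies Aδ̃ = 0 and obj₂(δ̃) ≥ 2^p (obj₁(x̃) − obj₁(x₀)). In particular, if x* maximizes obj₁ subject to Ax = b, the residual problem of maximizing obj₂ subject to Aδ = 0 has optimal value at least 2^p(obj₁(x*) − obj₁(x₀)). -/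

import Mathlib

open Finset Matrix

/-- The `r`-smoothed `s`-weighted `p`-norm:
`h_p(r, s, x) = Σ_i (r_i x_i^2 + s |x_i|^p)`. -/
noncomputable def hP (p : ℝ) {m : ℕ} (r : Fin m → ℝ) (s : ℝ) (x : Fin m → ℝ) : ℝ :=
  ∑ i, (r i * x i ^ 2 + s * |x i| ^ p)

/-- The gradient of `h_p(r, s, ·)` at `x`: its `i`-th entry is
`2 r_i x_i + p s |x_i|^{p-2} x_i`. -/
noncomputable def gradHP (p : ℝ) {m : ℕ} (r : Fin m → ℝ) (s : ℝ) (x : Fin m → ℝ) :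
    Fin m → ℝ :=
  fun i => 2 * r i * x i + p * s * |x i| ^ (p - 2) * x i

/-- The objective `obj(x) = gᵀx − h_p(r, s, x)` of a smoothed `p`-norm problem. -/
noncomputable def objFn (p : ℝ) {m : ℕ} (g r : Fin m → ℝ) (s : ℝ) (x : Fin m → ℝ) : ℝ :=
  (∑ i, g i * x i) - hP p r s x

/-!
The whole statement reduces, coordinate by coordinate, to a lower bound on the Bregman
divergence of `t ↦ |t|^p` for `p ≥ 2`:
`|x|^{p-2} d^2 + |d|^p ≤ 2^p (|x + d|^p - |x|^p - p |x|^{p-2} x d)`.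
The quadratic part `r_i x_i^2` has Bregman divergence exactly `r_i d_i^2 ≤ 2^p r_i d_i^2`, and
the linear part `gᵀx` has none, so summing gives `obj₂(δ) ≥ 2^p (obj₁(x₀ + δ) - obj₁(x₀))`;
feasibility of `δ = x̃ - x₀` is linearity of `A`.

For `x ≠ 0`, substituting `u = d / x` and scaling by `|x|^p` reduces the scalar bound to
`F(u) ≥ 0` for
`F(u) = |1 + u|^p - 1 - p u - 2^{-p} (u^2 + |u|^p)`. Since `F(0) = 0`, it suffices that `F'`
has the sign of `u`; this is checked separately on `u > 0` (Bernoulli and superadditivity of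
`t^{p-1}`), on `-1 < u < 0` (`t^{p-1} ≤ t` on `[0, 1]`) and on `u ≤ -1` (power mean inequality).
-/

lemma abs_rpow_sub_two_mul_of_nonneg {p : ℝ} (hp : 1 < p) {t : ℝ} (ht : 0 ≤ t) :
    |t| ^ (p - 2) * t = t ^ (p - 1) := by
  rw [abs_of_nonneg ht]
  rcases ht.eq_or_lt with rfl | ht
  · rw [mul_zero, Real.zero_rpow (by linarith)]
  · rw [show p - 1 = p - 2 + 1 by ring, Real.rpow_add_one ht.ne']

lemma abs_rpow_sub_two_mul_of_nonpos {p : ℝ} (hp : 1 < p) {t : ℝ} (ht : t ≤ 0) :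
    |t| ^ (p - 2) * t = -(-t) ^ (p - 1) := by
  rw [← abs_rpow_sub_two_mul_of_nonneg hp (neg_nonneg.2 ht), abs_neg, mul_neg, neg_neg]

lemma Real.rpow_add_le_mul_rpow_add_rpow {a b q : ℝ} (ha : 0 ≤ a) (hb : 0 ≤ b) (hq : 1 ≤ q) :
    (a + b) ^ q ≤ 2 ^ (q - 1) * (a ^ q + b ^ q) := by
  lift a to NNReal using ha
  lift b to NNReal using hb
  exact_mod_cast NNReal.rpow_add_le_mul_rpow_add_rpow a b hq

lemma mul_add_rpow_le_mul_one_add_rpow_sub_one {p c u : ℝ} (hp : 2 ≤ p) (hc : c ≤ 1 / 2)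
    (hu : 0 ≤ u) : c * (2 * u + p * u ^ (p - 1)) ≤ p * ((1 + u) ^ (p - 1) - 1) := by
  have hbern : 1 + (p - 1) * u ≤ (1 + u) ^ (p - 1) :=
    one_add_mul_self_le_rpow_one_add (by linarith) (by linarith)
  have hsuper : 1 + u ^ (p - 1) ≤ (1 + u) ^ (p - 1) := by
    simpa using Real.add_rpow_le_rpow_add zero_le_one hu (by linarith : 1 ≤ p - 1)
  nlinarith [mul_le_mul_of_nonneg_right hc (by positivity : 0 ≤ 2 * u + p * u ^ (p - 1)),
    mul_le_mul_of_nonneg_right (by nlinarith : 1 ≤ p * (p - 1) / 2) hu]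

lemma mul_add_rpow_le_mul_one_sub_rpow_sub_one {p c v : ℝ} (hp : 2 ≤ p) (hc : c ≤ 1 / 2)
    (hv : 0 ≤ v) (hv1 : v ≤ 1) : c * (2 * v + p * v ^ (p - 1)) ≤ p * (1 - (1 - v) ^ (p - 1)) := by
  have h1 : (1 - v) ^ (p - 1) ≤ 1 - v :=
    Real.rpow_le_self_of_le_one (by linarith) (by linarith) (by linarith)
  have h2 : v ^ (p - 1) ≤ v := Real.rpow_le_self_of_le_one hv hv1 (by linarith)
  nlinarith [mul_le_mul_of_nonneg_right hc (by positivity : 0 ≤ 2 * v + p * v ^ (p - 1))]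

lemma two_rpow_inv_mul_add_rpow_le {p w : ℝ} (hp : 2 ≤ p) (hw : 0 ≤ w) :
    (2 ^ p)⁻¹ * (2 * (1 + w) + p * (1 + w) ^ (p - 1)) ≤ p * (1 + w ^ (p - 1)) := by
  have hmean : (1 + w) ^ (p - 1) ≤ 2 ^ (p - 2) * (1 + w ^ (p - 1)) := by
    simpa [show p - 1 - 1 = p - 2 by ring] using
      Real.rpow_add_le_mul_rpow_add_rpow zero_le_one hw (by linarith : 1 ≤ p - 1)
  have hlin : 1 + w ≤ (1 + w) ^ (p - 1) :=
    Real.self_le_rpow_of_one_le (by linarith) (by linarith)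
  have hquarter : (2 ^ p)⁻¹ * (1 + w) ^ (p - 1) ≤ (1 + w ^ (p - 1)) / 4 := by
    calc (2 ^ p)⁻¹ * (1 + w) ^ (p - 1) ≤ (2 ^ p)⁻¹ * (2 ^ (p - 2) * (1 + w ^ (p - 1))) := by
          gcongr
      _ = (1 + w ^ (p - 1)) / 4 := by
          rw [Real.rpow_sub two_pos, Real.rpow_two]; field_simp; ring
  have hc0 : (0 : ℝ) ≤ (2 ^ p)⁻¹ := by positivity
  have hpow : 0 ≤ w ^ (p - 1) := Real.rpow_nonneg hw _
  nlinarith [mul_le_mul_of_nonneg_left hlin hc0]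

lemma one_add_mul_add_two_rpow_inv_mul_le_abs_one_add_rpow {p : ℝ} (hp : 2 ≤ p) (u : ℝ) :
    1 + p * u + (2 ^ p)⁻¹ * (u ^ 2 + |u| ^ p) ≤ |1 + u| ^ p := by
  have hp1 : 1 < p := by linarith
  set c : ℝ := (2 ^ p)⁻¹
  have hc : c ≤ 1 / 2 := by
    rw [one_div]
    refine inv_anti₀ two_pos ?_
    calc (2 : ℝ) = 2 ^ (1 : ℝ) := (Real.rpow_one 2).symm
      _ ≤ 2 ^ p := Real.rpow_le_rpow_of_exponent_le one_le_two (by linarith)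
  let F : ℝ → ℝ := fun u => |1 + u| ^ p - (1 + p * u + c * (u ^ 2 + |u| ^ p))
  have hF : ∀ x, HasDerivAt F
      (p * (|1 + x| ^ (p - 2) * (1 + x)) - (p + c * (2 * x + p * (|x| ^ (p - 2) * x)))) x := by
    intro x
    have hshift : HasDerivAt (fun u : ℝ => |1 + u| ^ p) (p * |1 + x| ^ (p - 2) * (1 + x)) x := by
      simpa [Function.comp_def] using
        (hasDerivAt_abs_rpow (1 + x) hp1).comp x ((hasDerivAt_id x).const_add 1)
    have hsq : HasDerivAt (fun u : ℝ => u ^ 2) (2 * x) x := by simpa using hasDerivAt_pow 2 x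
    exact (hshift.sub ((((hasDerivAt_id x).const_mul p).const_add 1).add
      ((hsq.add (hasDerivAt_abs_rpow x hp1)).const_mul c))).congr_deriv (by ring)
  have hmin : IsMinOn F Set.univ 0 := by
    refine isMinOn_univ_of_deriv (hF 0).continuousAt
      (fun x _ => (hF x).differentiableAt.differentiableWithinAt)
      (fun x _ => (hF x).differentiableAt.differentiableWithinAt) ?_ ?_
    · intro x (hx : x < 0)
      rw [(hF x).deriv, abs_rpow_sub_two_mul_of_nonpos hp1 hx.le]
      rcases le_or_gt x (-1) with hx1 | hx1
      · rw [abs_rpow_sub_two_mul_of_nonpos hp1 (by linarith : 1 + x ≤ 0)]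
        have := two_rpow_inv_mul_add_rpow_le hp (by linarith : 0 ≤ -1 - x)
        rw [show 1 + (-1 - x) = -x by ring, show -1 - x = -(1 + x) by ring] at this
        linarith
      · rw [abs_rpow_sub_two_mul_of_nonneg hp1 (by linarith : 0 ≤ 1 + x)]
        have := mul_add_rpow_le_mul_one_sub_rpow_sub_one hp hc (neg_nonneg.2 hx.le) (by linarith)
        rw [sub_neg_eq_add] at this
        linarith
    · intro x (hx : 0 < x)
      rw [(hF x).deriv, abs_rpow_sub_two_mul_of_nonneg hp1 hx.le,
        abs_rpow_sub_two_mul_of_nonneg hp1 (by linarith : 0 ≤ 1 + x)]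
      linarith [mul_add_rpow_le_mul_one_add_rpow_sub_one hp hc hx.le]
  have hF0 : F 0 = 0 := by norm_num [F, Real.zero_rpow (by linarith : p ≠ 0)]
  have hFu : F 0 ≤ F u := hmin (Set.mem_univ u)
  rw [hF0] at hFu
  exact sub_nonneg.1 hFu

lemma abs_rpow_sub_two_mul_sq_add_abs_rpow_le {p : ℝ} (hp : 2 ≤ p) (x d : ℝ) :
    |x| ^ (p - 2) * d ^ 2 + |d| ^ p ≤
      2 ^ p * (|x + d| ^ p - |x| ^ p - p * |x| ^ (p - 2) * x * d) := by
  have h2p : (1 : ℝ) ≤ 2 ^ p := Real.one_le_rpow one_le_two (by linarith)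
  rcases eq_or_ne x 0 with rfl | hx
  · have hd : 0 ≤ |d| ^ p := by positivity
    -- `0 ^ (p - 2)` is `1` when `p = 2` and `0` when `p > 2`.
    rcases hp.eq_or_lt with rfl | hp2
    · norm_num [Real.rpow_two, sq_abs]
      nlinarith [sq_nonneg d]
    · simp [Real.zero_rpow (by linarith : p - 2 ≠ 0), Real.zero_rpow (by linarith : p ≠ 0)]
      nlinarith
  have hax : 0 < |x| := abs_pos.2 hx
  have key := one_add_mul_add_two_rpow_inv_mul_le_abs_one_add_rpow hp (d / x)
  have habs : |x| ^ p = |x| ^ (p - 2) * x ^ 2 := by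
    rw [← sq_abs, ← Real.rpow_natCast, ← Real.rpow_add hax]; norm_num
  rw [show 1 + d / x = (x + d) / x by field_simp, abs_div, abs_div,
    Real.div_rpow (abs_nonneg _) hax.le, Real.div_rpow (abs_nonneg _) hax.le] at key
  have hxp : 0 < |x| ^ p := by positivity
  have hscaled := mul_le_mul_of_nonneg_left key hxp.le
  rw [mul_div_cancel₀ _ hxp.ne'] at hscaled
  have hexpand : |x| ^ p * (1 + p * (d / x) + (2 ^ p)⁻¹ * ((d / x) ^ 2 + |d| ^ p / |x| ^ p)) =
      |x| ^ p + p * |x| ^ (p - 2) * x * d + (2 ^ p)⁻¹ * (|x| ^ (p - 2) * d ^ 2 + |d| ^ p) := by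
    rw [habs]; field_simp
  rw [hexpand] at hscaled
  calc |x| ^ (p - 2) * d ^ 2 + |d| ^ p
      = 2 ^ p * ((2 ^ p)⁻¹ * (|x| ^ (p - 2) * d ^ 2 + |d| ^ p)) := by field_simp
    _ ≤ 2 ^ p * (|x + d| ^ p - |x| ^ p - p * |x| ^ (p - 2) * x * d) := by gcongr; linarith

lemma hP_le_two_rpow_mul_sub_sub_sum_gradHP_mul {p : ℝ} (hp : 2 ≤ p) {m : ℕ} {r : Fin m → ℝ}
    (hr : ∀ i, 0 ≤ r i) {s : ℝ} (hs : 0 ≤ s) (x d : Fin m → ℝ) :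
    hP p (fun i => r i + s * |x i| ^ (p - 2)) s d ≤
      2 ^ p * (hP p r s (x + d) - hP p r s x - ∑ i, gradHP p r s x i * d i) := by
  have h2p : (1 : ℝ) ≤ 2 ^ p := Real.one_le_rpow one_le_two (by linarith)
  simp only [hP, gradHP, ← sum_sub_distrib, mul_sum, Pi.add_apply]
  refine sum_le_sum fun i _ => ?_
  have key := abs_rpow_sub_two_mul_sq_add_abs_rpow_le hp (x i) (d i)
  nlinarith [mul_le_mul_of_nonneg_left key hs,
    mul_nonneg (mul_nonneg (sub_nonneg.2 h2p) (hr i)) (sq_nonneg (d i))]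

lemma two_rpow_mul_objFn_add_sub_le {p : ℝ} (hp : 2 ≤ p) {m : ℕ} (g : Fin m → ℝ)
    {r : Fin m → ℝ} (hr : ∀ i, 0 ≤ r i) {s : ℝ} (hs : 0 ≤ s) (x d : Fin m → ℝ) :
    2 ^ p * (objFn p g r s (x + d) - objFn p g r s x) ≤
      objFn p (fun i => 2 ^ p * (g i - gradHP p r s x i))
        (fun i => r i + s * |x i| ^ (p - 2)) s d := by
  have h := hP_le_two_rpow_mul_sub_sub_sum_gradHP_mul hp hr hs x d
  have hlin : ∑ i, 2 ^ p * (g i - gradHP p r s x i) * d i =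
      2 ^ p * ((∑ i, g i * (x + d) i) - ∑ i, g i * x i - ∑ i, gradHP p r s x i * d i) := by
    simp only [mul_sum, ← sum_sub_distrib, Pi.add_apply]
    exact sum_congr rfl fun i _ => by ring
  rw [objFn, objFn, objFn, hlin]
  linarith

/-- Iterative refinement, residual direction: for a feasible `x̃`, the vector
`δ̃ = x̃ − x₀` is feasible for the residual problem and achieves residual objective
at least `2^p (obj₁(x̃) − obj₁(x₀))`; in particular the optimal value of the residual
problem is at least `2^p (obj₁(x*) − obj₁(x₀))` for a maximizer `x*`. -/
theorem residual_problem_lower_bound (p : ℝ) (hp : 2 ≤ p) (k m : ℕ)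
    (A : Matrix (Fin k) (Fin m) ℝ) (b : Fin k → ℝ) (g r : Fin m → ℝ)
    (hr : ∀ i, 0 ≤ r i) (s : ℝ) (hs : 0 ≤ s)
    (x₀ : Fin m → ℝ) (hx₀ : A.mulVec x₀ = b)
    (g' r' : Fin m → ℝ)
    (hg' : g' = fun i => 2 ^ p * (g i - gradHP p r s x₀ i))
    (hr' : r' = fun i => r i + s * |x₀ i| ^ (p - 2)) :
    (∀ xt : Fin m → ℝ, A.mulVec xt = b →
        A.mulVec (xt - x₀) = 0 ∧
          2 ^ p * (objFn p g r s xt - objFn p g r s x₀) ≤ objFn p g' r' s (xt - x₀)) ∧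
      (∀ xstar : Fin m → ℝ, A.mulVec xstar = b →
        (∀ y : Fin m → ℝ, A.mulVec y = b → objFn p g r s y ≤ objFn p g r s xstar) →
        ∃ δ : Fin m → ℝ, A.mulVec δ = 0 ∧
          2 ^ p * (objFn p g r s xstar - objFn p g r s x₀) ≤ objFn p g' r' s δ) := by
  have residual : ∀ xt : Fin m → ℝ, A.mulVec xt = b →
      A.mulVec (xt - x₀) = 0 ∧
        2 ^ p * (objFn p g r s xt - objFn p g r s x₀) ≤ objFn p g' r' s (xt - x₀) := by
    intro xt hxt
    refine ⟨by rw [mulVec_sub, hxt, hx₀, sub_self], ?_⟩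
    subst hg' hr'
    simpa only [add_sub_cancel] using two_rpow_mul_objFn_add_sub_le hp g hr hs x₀ (xt - x₀)
  exact ⟨residual, fun xstar hxstar _ => ⟨xstar - x₀, residual xstar hxstar⟩⟩
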